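/- Let K be an inductive amalgamation class and let U be a rich model of K. Then U is homogeneous: every morphism f : U → U with |f| < |U| has an extension to an automorphism of U. -/
import Mathlib


namespace Amalg

open FirstOrder FirstOrder.Language Set Cardinal

universe u

/-- A "model": an `L`-structure whose carrier is a subset of the fixed universe of points `W`. -/
structure Mdl (L : FirstOrder.Language.{u, u}) (W : Type u) where
  s : Set W
  str : L.Structure ↥s

attribute [instance] Mdl.str

variable {L : FirstOrder.Language.{u, u}} {W : Type u}

/-- The graph of the identity map on a set `s`. -/
def idGraph (s : Set W) : Set (W × W) := {p | p.1 ∈ s ∧ p.1 = p.2}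

/-- Composition of (graphs of) partial maps. -/
def relComp (F G : Set (W × W)) : Set (W × W) := {p | ∃ b, (p.1, b) ∈ F ∧ (b, p.2) ∈ G}

/-- The graph of the inverse of a partial map. -/
def swapGraph (G : Set (W × W)) : Set (W × W) := {p | (p.2, p.1) ∈ G}

/-- The graph `G` is a map from (a subset of) `M` to `N`. -/
def inCarriers (M N : Mdl L W) (G : Set (W × W)) : Prop :=
  ∀ p ∈ G, p.1 ∈ M.s ∧ p.2 ∈ N.s

/-- `G` is (the graph of) a partial embedding from `M` to `N`: it preserves all
quantifier-free formulas in both directions. -/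
def IsPartialEmbedding (M N : Mdl L W) (G : Set (W × W)) : Prop :=
  inCarriers M N G ∧
    ∀ (n : ℕ) (φ : L.Formula (Fin n)), φ.IsQF →
      ∀ (x : Fin n → ↥M.s) (y : Fin n → ↥N.s),
        (∀ i, ((x i : W), (y i : W)) ∈ G) → (φ.Realize x ↔ φ.Realize y)

/-- `G` is (the graph of) an elementary map from `M` to `N`: it preserves all
first-order formulas in both directions. -/
def IsElemMap (M N : Mdl L W) (G : Set (W × W)) : Prop :=
  inCarriers M N G ∧
    ∀ (n : ℕ) (φ : L.Formula (Fin n)) (x : Fin n → ↥M.s) (y : Fin n → ↥N.s),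
      (∀ i, ((x i : W), (y i : W)) ∈ G) → (φ.Realize x ↔ φ.Realize y)

/-- A category of infinite `L`-structures and partial embeddings between them, satisfying
axioms K0, K1, K2. -/
structure CatC (L : FirstOrder.Language.{u, u}) (W : Type u) where
  IsMdl : Mdl L W → Prop
  IsMor : Mdl L W → Mdl L W → Set (W × W) → Prop
  infinite : ∀ M, IsMdl M → M.s.Infinite
  mor_src : ∀ M N G, IsMor M N G → IsMdl M
  mor_tgt : ∀ M N G, IsMor M N G → IsMdl N
  mor_pe : ∀ M N G, IsMor M N G → IsPartialEmbedding M N G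
  id_mor : ∀ M, IsMdl M → IsMor M M (idGraph M.s)
  comp_mor : ∀ M N P F G, IsMor M N F → IsMor N P G → IsMor M P (relComp F G)
  k0 : ∀ M N : Mdl L W, IsMdl M → (↥M.s ≅[L] ↥N.s) → IsMdl N
  k1 : ∀ M N G, IsMdl M → IsMdl N → IsElemMap M N G → IsMor M N G
  k2 : ∀ M N G, IsMor M N G → IsMor N M (swapGraph G)

/-- `M` is a strong submodel of `N`: `M ⊆ N` and the identity on `M` is a morphism. -/
def Le (IsMor : Mdl L W → Mdl L W → Set (W × W) → Prop) (M N : Mdl L W) : Prop :=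
  M.s ⊆ N.s ∧ IsMor M N (idGraph M.s)

/-- `G` is a strong embedding of `M` into `N`: a total morphism. -/
def StrongEmb (IsMor : Mdl L W → Mdl L W → Set (W × W) → Prop)
    (M N : Mdl L W) (G : Set (W × W)) : Prop :=
  IsMor M N G ∧ ∀ a ∈ M.s, ∃ b, (a, b) ∈ G

/-- A category as above additionally satisfying axiom R (restrictions of morphisms
are morphisms). -/
structure CatR (L : FirstOrder.Language.{u, u}) (W : Type u) extends CatC L W where
  restr : ∀ M N F G, IsMor M N G → F ⊆ G → IsMor M N F

/-- An inductive amalgamation class: axioms K0, K1, K2, R, Ap and In. -/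
structure IAC (L : FirstOrder.Language.{u, u}) (W : Type u) extends CatR L W where
  ap : ∀ M N F, IsMor M N F →
    ∃ (N' : Mdl L W) (H : Set (W × W)), Le IsMor N N' ∧ F ⊆ H ∧ StrongEmb IsMor M N' H
  ind : ∀ (ι : Type u) [LinearOrder ι] [Nonempty ι] (Ms : ι → Mdl L W),
    (∀ i j, i ≤ j → Le IsMor (Ms i) (Ms j)) →
    ∃ Mu : Mdl L W, Mu.s = ⋃ i, (Ms i).s ∧ IsMdl Mu ∧ ∀ i, Le IsMor (Ms i) Mu

/-- `U` is a `κ`-rich model: every morphism `f : M → U` with `|f| < |M| ≤ κ` extends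
to a strong embedding of `M` into `U`. -/
def RichAt (IsMdl : Mdl L W → Prop) (IsMor : Mdl L W → Mdl L W → Set (W × W) → Prop)
    (κ : Cardinal.{u}) (U : Mdl L W) : Prop :=
  IsMdl U ∧ ∀ (M : Mdl L W) (G : Set (W × W)), IsMor M U G → #↥G < #↥M.s → #↥M.s ≤ κ →
    ∃ H, G ⊆ H ∧ StrongEmb IsMor M U H

/-- `U` is rich: `|U|`-rich. -/
def Rich (IsMdl : Mdl L W → Prop) (IsMor : Mdl L W → Mdl L W → Set (W × W) → Prop)
    (U : Mdl L W) : Prop :=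
  RichAt IsMdl IsMor (#↥U.s) U

/-- The class is connected: between any two models there is a morphism. -/
def Connected (IsMdl : Mdl L W → Prop)
    (IsMor : Mdl L W → Mdl L W → Set (W × W) → Prop) : Prop :=
  ∀ M N, IsMdl M → IsMdl N → ∃ G, IsMor M N G

/-- The theory of the rich models: the sentences true in every rich model. -/
def Trich (IsMdl : Mdl L W → Prop)
    (IsMor : Mdl L W → Mdl L W → Set (W × W) → Prop) : L.Theory :=
  {φ | ∀ U : Mdl L W, Rich IsMdl IsMor U → Sentence.Realize (↥U.s) φ}

/-- The class is full: if every sentence true in a model `M` is true in some rich model,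
then some rich model satisfies the whole theory of `M`. -/
def Full (IsMdl : Mdl L W → Prop)
    (IsMor : Mdl L W → Mdl L W → Set (W × W) → Prop) : Prop :=
  ∀ M, IsMdl M →
    (∀ φ : L.Sentence, Sentence.Realize (↥M.s) φ → ∃ U, Rich IsMdl IsMor U ∧ Sentence.Realize (↥U.s) φ) →
    ∃ U, Rich IsMdl IsMor U ∧ ∀ φ : L.Sentence, Sentence.Realize (↥M.s) φ → Sentence.Realize (↥U.s) φ

/-- `M` is a substructure of `N`: `M ⊆ N` and the inclusion is a partial embedding. -/
def Substr (M N : Mdl L W) : Prop :=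
  M.s ⊆ N.s ∧ IsPartialEmbedding M N (idGraph M.s)

/-- `M` is an elementary substructure of `N`. -/
def ElemSubstr (M N : Mdl L W) : Prop :=
  M.s ⊆ N.s ∧ IsElemMap M N (idGraph M.s)

/-- Realization of a formula in an explicitly given structure. -/
def RealizeIn (L : FirstOrder.Language.{u, u}) (N : Type u) (SN : L.Structure N) {α : Type u}
    (φ : L.Formula α) (v : α → N) : Prop :=
  letI := SN
  φ.Realize v

/-- `M` is `κ`-saturated: every type (in finitely many variables) over a parameter set
`A ⊆ M` with `|A| < κ` which is consistent with the theory of `M` with parameters from `A`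
is realized in `M`. -/
def IsSatAt (L : FirstOrder.Language.{u, u}) (κ : Cardinal.{u}) (M : Type u) [L.Structure M] : Prop :=
  ∀ (A : Set M), #↥A < κ →
    ∀ (n : ℕ) (p : Set (L.Formula (Fin n ⊕ ↥A))),
      (∃ (N : Type u) (SN : L.Structure N) (v : ↥A → N) (w : Fin n → N),
        (∀ ψ : L.Formula ↥A, ψ.Realize ((↑) : ↥A → M) ↔ RealizeIn L N SN ψ v) ∧
        ∀ φ ∈ p, RealizeIn L N SN φ (Sum.elim w v)) →
      ∃ a : Fin n → M, ∀ φ ∈ p, φ.Realize (Sum.elim a ((↑) : ↥A → M))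

/-- `M` is saturated: `|M|`-saturated. -/
def IsSat (L : FirstOrder.Language.{u, u}) (M : Type u) [L.Structure M] : Prop :=
  IsSatAt L (#M) M

/-- A theory is model-complete: whenever `M ⊆ N` are models of `T`,
`M` is an elementary substructure of `N`. -/
def IsModelComplete (W : Type u) (T : L.Theory) : Prop :=
  ∀ M N : Mdl L W, Theory.Model (↥M.s) T → Theory.Model (↥N.s) T → Substr M N → ElemSubstr M N



/-! ### Auxiliary development -/

lemma swapGraph_swapGraph (G : Set (W × W)) : swapGraph (swapGraph G) = G := rfl

lemma mem_swapGraph {G : Set (W × W)} {a b : W} : (a, b) ∈ swapGraph G ↔ (b, a) ∈ G := Iff.rfl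

lemma swapGraph_insert (G : Set (W × W)) (a b : W) :
    swapGraph (insert (a, b) G) = insert (b, a) (swapGraph G) := by
  ext ⟨x, y⟩
  simp only [swapGraph, Set.mem_insert_iff, Set.mem_setOf_eq, Prod.mk.injEq]
  tauto

lemma mk_swapGraph (G : Set (W × W)) : #↥(swapGraph G) = #↥G := by
  have h : swapGraph G = Prod.swap '' G := by
    ext ⟨x, y⟩
    constructor
    · intro h; exact ⟨(y, x), h, rfl⟩
    · rintro ⟨⟨u, v⟩, hu, heq⟩
      obtain ⟨rfl, rfl⟩ : v = x ∧ u = y := by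
        simpa [Prod.ext_iff] using heq
      exact hu
  rw [h, Cardinal.mk_image_eq Prod.swap_injective]

lemma IsElemMap.isPartialEmbedding {M N : Mdl L W} {G : Set (W × W)} (h : IsElemMap M N G) :
    IsPartialEmbedding M N G :=
  ⟨h.1, fun n φ _ x y hxy => h.2 n φ x y hxy⟩

lemma IsElemMap.mono {M N : Mdl L W} {G F : Set (W × W)} (h : IsElemMap M N G) (hFG : F ⊆ G) :
    IsElemMap M N F :=
  ⟨fun p hp => h.1 p (hFG hp), fun n φ x y hxy => h.2 n φ x y fun i => hFG (hxy i)⟩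

lemma IsElemMap.swap {M N : Mdl L W} {G : Set (W × W)} (h : IsElemMap M N G) :
    IsElemMap N M (swapGraph G) :=
  ⟨fun p hp => ⟨(h.1 _ hp).2, (h.1 _ hp).1⟩,
   fun n φ x y hxy => (h.2 n φ y x fun i => hxy i).symm⟩

lemma isQF_toFormula {α : Type*} {k : ℕ} {φ : L.BoundedFormula α k} (h : φ.IsQF) :
    φ.toFormula.IsQF := by
  induction h with
  | falsum => exact BoundedFormula.isQF_bot
  | of_isAtomic h =>
    cases h with
    | equal t₁ t₂ => exact (BoundedFormula.IsAtomic.equal _ _).isQF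
    | rel R ts => exact (BoundedFormula.IsAtomic.rel _ _).isQF
  | imp _ _ ih₁ ih₂ => exact ih₁.imp ih₂

lemma pe_realize_iff {M N : Mdl L W} {F : Set (W × W)} (hF : IsPartialEmbedding M N F)
    {n k : ℕ} {φ : L.BoundedFormula (Fin n) k} (hφ : φ.IsQF)
    (x : Fin n → ↥M.s) (y : Fin n → ↥N.s) (z : Fin k → ↥M.s) (w : Fin k → ↥N.s)
    (hxy : ∀ i, ((x i : W), (y i : W)) ∈ F) (hzw : ∀ j, ((z j : W), (w j : W)) ∈ F) :
    (φ.Realize x z ↔ φ.Realize y w) := by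
  have t1 : ∀ (P : Mdl L W) (u : Fin n → ↥P.s) (vz : Fin k → ↥P.s),
      (φ.toFormula.relabel (finSumFinEquiv (m := n) (n := k))).Realize
        (Sum.elim u vz ∘ finSumFinEquiv.symm) ↔ φ.Realize u vz := by
    intro P u vz
    rw [Formula.realize_relabel]
    have hcomp : (Sum.elim u vz ∘ ⇑finSumFinEquiv.symm) ∘ ⇑finSumFinEquiv = Sum.elim u vz := by
      ext i; simp
    rw [hcomp, BoundedFormula.realize_toFormula, Sum.elim_comp_inl, Sum.elim_comp_inr]
  have hqf : (φ.toFormula.relabel (finSumFinEquiv (m := n) (n := k))).IsQF :=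
    BoundedFormula.IsQF.relabel (n := 0) (isQF_toFormula hφ)
      (Sum.inl ∘ ⇑(finSumFinEquiv (m := n) (n := k)))
  have key := hF.2 (n + k) (φ.toFormula.relabel (finSumFinEquiv (m := n) (n := k)))
    hqf
    (Sum.elim x z ∘ finSumFinEquiv.symm) (Sum.elim y w ∘ finSumFinEquiv.symm) ?_
  · rw [t1, t1] at key
    exact key
  · intro i
    rcases h : finSumFinEquiv.symm i with j | j <;>
      simp only [Function.comp_apply, h, Sum.elim_inl, Sum.elim_inr]
    · exact hxy j
    · exact hzw j

lemma aleph0_le_mk_of_mdl {K : IAC L W} {U : Mdl L W} (hU : K.IsMdl U) : ℵ₀ ≤ #↥U.s := by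
  have h1 : U.s.Infinite := K.infinite U hU
  have h2 : Infinite ↥U.s := h1.to_subtype
  exact Cardinal.infinite_iff.mp h2

lemma strong_realize_iff (K : IAC L W) (U : Mdl L W) (hU : Rich K.IsMdl K.IsMor U)
    {n : ℕ} : ∀ {k : ℕ} (φ : L.BoundedFormula (Fin n) k) (H : Set (W × W)),
    StrongEmb K.IsMor U U H → ∀ (x y : Fin n → ↥U.s) (z w : Fin k → ↥U.s),
    (∀ i, ((x i : W), (y i : W)) ∈ H) → (∀ j, ((z j : W), (w j : W)) ∈ H) →
    (φ.Realize x z ↔ φ.Realize y w) := by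
  intro k φ
  induction φ with
  | falsum =>
    intro H hH x y z w hxy hzw
    exact Iff.rfl
  | equal t₁ t₂ =>
    intro H hH x y z w hxy hzw
    exact pe_realize_iff (K.mor_pe _ _ _ hH.1)
      ((BoundedFormula.IsAtomic.equal _ _).isQF) x y z w hxy hzw
  | rel R ts =>
    intro H hH x y z w hxy hzw
    exact pe_realize_iff (K.mor_pe _ _ _ hH.1)
      ((BoundedFormula.IsAtomic.rel _ _).isQF) x y z w hxy hzw
  | imp φ₁ φ₂ ih₁ ih₂ =>
    intro H hH x y z w hxy hzw
    simp only [BoundedFormula.realize_imp]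
    exact imp_congr (ih₁ H hH x y z w hxy hzw) (ih₂ H hH x y z w hxy hzw)
  | all φ ih =>
    intro H hH x y z w hxy hzw
    simp only [BoundedFormula.realize_all]
    constructor
    · intro hall c'
      set S : Set (W × W) := (Set.range fun i : Fin n => ((y i : W), (x i : W))) ∪
        (Set.range fun j => ((w j : W), (z j : W))) with hS
      have hSsub : S ⊆ swapGraph H := by
        rintro p (⟨i, rfl⟩ | ⟨j, rfl⟩)
        · exact hxy i
        · exact hzw j
      have hSmor : K.IsMor U U S := K.restr U U S (swapGraph H) (K.k2 U U H hH.1) hSsub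
      have hScard : #↥S < #↥U.s :=
        lt_of_lt_of_le ((Set.finite_range _).union (Set.finite_range _)).lt_aleph0
          (aleph0_le_mk_of_mdl hU.1)
      obtain ⟨H', hSH', hH'⟩ := hU.2 U S hSmor hScard le_rfl
      obtain ⟨b, hb⟩ := hH'.2 (c' : W) c'.2
      have hbU : b ∈ U.s := ((K.mor_pe _ _ _ hH'.1).1 _ hb).2
      have key := ih H' hH' y x (Fin.snoc w c') (Fin.snoc z ⟨b, hbU⟩)
        (fun i => hSH' (Or.inl ⟨i, rfl⟩)) ?_
      · exact key.mpr (hall ⟨b, hbU⟩)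
      · intro j
        refine Fin.lastCases ?_ ?_ j
        · simpa only [Fin.snoc_last] using hb
        · intro i
          simp only [Fin.snoc_castSucc]
          exact hSH' (Or.inr ⟨i, rfl⟩)
    · intro hall c
      obtain ⟨d, hd⟩ := hH.2 (c : W) c.2
      have hdU : d ∈ U.s := ((K.mor_pe _ _ _ hH.1).1 _ hd).2
      have key := ih H hH x y (Fin.snoc z c) (Fin.snoc w ⟨d, hdU⟩) hxy ?_
      · exact key.mpr (hall ⟨d, hdU⟩)
      · intro j
        refine Fin.lastCases ?_ ?_ j
        · simpa only [Fin.snoc_last] using hd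
        · intro i
          simp only [Fin.snoc_castSucc]
          exact hzw i

lemma strong_elem_subset (K : IAC L W) (U : Mdl L W) (hU : Rich K.IsMdl K.IsMor U)
    {H S : Set (W × W)} (hH : StrongEmb K.IsMor U U H) (hS : S ⊆ H) : IsElemMap U U S :=
  ⟨fun p hp => (K.mor_pe _ _ _ hH.1).1 p (hS hp), fun n φ x y hxy =>
    strong_realize_iff K U hU φ H hH x y default default
      (fun i => hS (hxy i)) (fun j => j.elim0)⟩

lemma small_mor_elem (K : IAC L W) (U : Mdl L W) (hU : Rich K.IsMdl K.IsMor U)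
    {F : Set (W × W)} (hF : K.IsMor U U F) (hcard : #↥F < #↥U.s) : IsElemMap U U F := by
  obtain ⟨H, hFH, hH⟩ := hU.2 U F hF hcard le_rfl
  exact strong_elem_subset K U hU hH hFH

lemma elem_union (U : Mdl L W) {ι : Type u} [LinearOrder ι] (C : ι → Set (W × W))
    (hmono : ∀ i j : ι, i ≤ j → C i ⊆ C j) (helem : ∀ i, IsElemMap U U (C i))
    {G0 : Set (W × W)} (hG0 : IsElemMap U U G0) (hsub : ∀ i, G0 ⊆ C i) :
    IsElemMap U U (G0 ∪ ⋃ i, C i) := by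
  constructor
  · rintro p (hp | hp)
    · exact hG0.1 p hp
    · obtain ⟨_, ⟨i, rfl⟩, hp⟩ := hp
      exact (helem i).1 p hp
  · intro n φ x y hxy
    rcases isEmpty_or_nonempty ι with h | h
    · have hempty : (⋃ i, C i) = ∅ := Set.iUnion_of_empty C
      rw [hempty, Set.union_empty] at hxy
      exact hG0.2 n φ x y hxy
    · cases n with
      | zero => rw [Subsingleton.elim x y]
      | succ m =>
        have hfC : ∀ i : Fin (m + 1), ∃ b, ((x i : W), (y i : W)) ∈ C b := by
          intro i
          rcases hxy i with hp | hp
          · exact ⟨h.some, hsub _ hp⟩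
          · obtain ⟨_, ⟨b, rfl⟩, hp⟩ := hp
            exact ⟨b, hp⟩
        choose f hf using hfC
        have hTne : (Finset.univ.image f).Nonempty :=
          Finset.image_nonempty.mpr Finset.univ_nonempty
        set b0 := (Finset.univ.image f).max' hTne with hb0
        refine (helem b0).2 _ φ x y fun i => hmono (f i) b0 ?_ (hf i)
        exact Finset.le_max' _ _ (Finset.mem_image_of_mem f (Finset.mem_univ i))

open scoped Classical in
/-- The one-point extension step. -/
noncomputable def stepFun (U : Mdl L W) (F : Set (W × W)) (c : W) : Set (W × W) :=
  if h : ∃ F', F ⊆ F' ∧ IsElemMap U U F' ∧ (∃ p q, F' ⊆ insert p (insert q F)) ∧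
      (∃ d, (c, d) ∈ F') ∧ (∃ d, (d, c) ∈ F') then h.choose else F

lemma stepFun_spec {U : Mdl L W} {F : Set (W × W)} {c : W}
    (h : ∃ F', F ⊆ F' ∧ IsElemMap U U F' ∧ (∃ p q, F' ⊆ insert p (insert q F)) ∧
      (∃ d, (c, d) ∈ F') ∧ (∃ d, (d, c) ∈ F')) :
    F ⊆ stepFun U F c ∧ IsElemMap U U (stepFun U F c) ∧
      (∃ p q, stepFun U F c ⊆ insert p (insert q F)) ∧
      (∃ d, (c, d) ∈ stepFun U F c) ∧ (∃ d, (d, c) ∈ stepFun U F c) := by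
  rw [stepFun, dif_pos h]
  exact h.choose_spec

lemma step_exists (K : IAC L W) (U : Mdl L W) (hU : Rich K.IsMdl K.IsMor U)
    {F : Set (W × W)} (hF : IsElemMap U U F) (hcard : #↥F < #↥U.s) {c : W} (hc : c ∈ U.s) :
    ∃ F', F ⊆ F' ∧ IsElemMap U U F' ∧ (∃ p q, F' ⊆ insert p (insert q F)) ∧
      (∃ d, (c, d) ∈ F') ∧ (∃ d, (d, c) ∈ F') := by
  have hκ0 : ℵ₀ ≤ #↥U.s := aleph0_le_mk_of_mdl hU.1
  have hone : (1 : Cardinal) < #↥U.s := lt_of_lt_of_le Cardinal.one_lt_aleph0 hκ0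
  have hmor : K.IsMor U U F := K.k1 U U F hU.1 hU.1 hF
  obtain ⟨H, hFH, hH⟩ := hU.2 U F hmor hcard le_rfl
  obtain ⟨d, hd⟩ := hH.2 c hc
  have hF1H : insert (c, d) F ⊆ H := Set.insert_subset hd hFH
  have hF1 : IsElemMap U U (insert (c, d) F) := strong_elem_subset K U hU hH hF1H
  have hF1card : #↥(insert (c, d) F : Set (W × W)) < #↥U.s :=
    lt_of_le_of_lt Cardinal.mk_insert_le (Cardinal.add_lt_of_lt hκ0 hcard hone)
  have hswmor : K.IsMor U U (swapGraph (insert (c, d) F)) :=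
    K.k1 U U _ hU.1 hU.1 hF1.swap
  have hswcard : #↥(swapGraph (insert (c, d) F)) < #↥U.s := by
    rw [mk_swapGraph]; exact hF1card
  obtain ⟨H₂, hsH₂, hH₂⟩ := hU.2 U _ hswmor hswcard le_rfl
  obtain ⟨d', hd'⟩ := hH₂.2 c hc
  have hS₂ : insert (c, d') (swapGraph (insert (c, d) F)) ⊆ H₂ := Set.insert_subset hd' hsH₂
  have hS₂elem : IsElemMap U U (insert (c, d') (swapGraph (insert (c, d) F))) :=
    strong_elem_subset K U hU hH₂ hS₂
  have hfin : IsElemMap U U (insert (d', c) (insert (c, d) F)) := by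
    have := hS₂elem.swap
    rwa [swapGraph_insert, swapGraph_swapGraph] at this
  refine ⟨insert (d', c) (insert (c, d) F), ?_, hfin, ⟨(d', c), (c, d), subset_rfl⟩, ?_, ?_⟩
  · exact (Set.subset_insert _ _).trans (Set.subset_insert _ _)
  · exact ⟨d, Set.mem_insert_iff.mpr (Or.inr (Set.mem_insert _ _))⟩
  · exact ⟨d', Set.mem_insert _ _⟩

/-- The transfinite chain of extensions. -/
noncomputable def chainF (U : Mdl L W) (G : Set (W × W)) {ι : Type u} [LinearOrder ι]
    [WellFoundedLT ι] (e : ι → W) : ι → Set (W × W) :=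
  IsWellFounded.fix (α := ι) (· < ·)
    (fun a ih => stepFun U (G ∪ ⋃ b : {x : ι // x < a}, ih b b.2) (e a))

/-- Everything accumulated before stage `a`. -/
noncomputable def prevF (U : Mdl L W) (G : Set (W × W)) {ι : Type u} [LinearOrder ι]
    [WellFoundedLT ι] (e : ι → W) (a : ι) : Set (W × W) :=
  G ∪ ⋃ b : {x : ι // x < a}, chainF U G e b

lemma chainF_eq (U : Mdl L W) (G : Set (W × W)) {ι : Type u} [LinearOrder ι]
    [WellFoundedLT ι] (e : ι → W) (a : ι) :
    chainF U G e a = stepFun U (prevF U G e a) (e a) :=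
  IsWellFounded.fix_eq _ _ a

/-- The new pairs added at stage `a`. -/
noncomputable def newF (U : Mdl L W) (G : Set (W × W)) {ι : Type u} [LinearOrder ι]
    [WellFoundedLT ι] (e : ι → W) (a : ι) : Set (W × W) :=
  chainF U G e a \ prevF U G e a

set_option maxHeartbeats 1000000 in
lemma chain_inv (K : IAC L W) (U : Mdl L W) (hU : Rich K.IsMdl K.IsMor U)
    (G : Set (W × W)) (hG : K.IsMor U U G) (hcard : #↥G < #↥U.s)
    {ι : Type u} [LinearOrder ι] [WellFoundedLT ι]
    (hsmall : ∀ a : ι, #{x : ι // x < a} < #↥U.s)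
    (e : ι → ↥U.s) :
    ∀ a : ι, prevF U G (fun i => ↑(e i)) a ⊆ chainF U G (fun i => ↑(e i)) a ∧
      IsElemMap U U (chainF U G (fun i => ↑(e i)) a) ∧
      #↥(newF U G (fun i => ↑(e i)) a) ≤ 2 ∧
      (chainF U G (fun i => ↑(e i)) a ⊆
        G ∪ ⋃ b : {x : ι // x ≤ a}, newF U G (fun i => ↑(e i)) b) ∧
      (∃ d, ((e a : W), d) ∈ chainF U G (fun i => ↑(e i)) a) ∧
      (∃ d, (d, (e a : W)) ∈ chainF U G (fun i => ↑(e i)) a) := by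
  have hκ0 : ℵ₀ ≤ #↥U.s := aleph0_le_mk_of_mdl hU.1
  have hGelem : IsElemMap U U G := small_mor_elem K U hU hG hcard
  set C : ι → Set (W × W) := chainF U G (fun i => ↑(e i)) with hC
  set P : ι → Set (W × W) := prevF U G (fun i => ↑(e i)) with hP
  set D : ι → Set (W × W) := newF U G (fun i => ↑(e i)) with hD
  clear_value C P D
  have hPb : ∀ b : ι, P b = G ∪ ⋃ c : {x : ι // x < b}, C ↑c := fun b => by
    rw [hP, hC]; rfl
  have hDb : ∀ b : ι, D b = C b \ P b := fun b => by
    rw [hD, hC, hP]; rfl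
  intro a
  induction a using WellFoundedLT.induction with
  | _ a ih =>
  -- monotonicity below a
  have hsubC : ∀ b c : ι, c < a → b < c → C b ⊆ C c := by
    intro b c hc hbc
    refine subset_trans ?_ (ih c hc).1
    rw [hPb c]
    exact subset_trans
      (Set.subset_iUnion (fun b' : {x : ι // x < c} => C ↑b') ⟨b, hbc⟩) Set.subset_union_right
  have hGsub : ∀ b : ι, b < a → G ⊆ C b := by
    intro b hb
    refine subset_trans ?_ (ih b hb).1
    rw [hPb b]
    exact Set.subset_union_left
  -- prev is elementary
  have hPa := hPb a
  have hDa := hDb a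
  have hprevElem : IsElemMap U U (P a) := by
    rw [hPa]
    refine elem_union U (fun b : {x : ι // x < a} => C b) ?_ (fun b => (ih b.1 b.2).2.1)
      hGelem (fun b => hGsub b.1 b.2)
    rintro ⟨b, hb⟩ ⟨c, hc⟩ hbc
    rcases eq_or_lt_of_le (Subtype.mk_le_mk.mp hbc) with h | h
    · subst h; exact subset_rfl
    · exact hsubC b c hc h
  -- prev is contained in G plus small new sets
  have hprevSub : P a ⊆ G ∪ ⋃ b : {x : ι // x < a}, D b := by
    rw [hPa]
    rintro p (hp | hp)
    · exact Set.mem_union_left _ hp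
    · obtain ⟨_, ⟨⟨b, hb⟩, rfl⟩, hp⟩ := hp
      rcases (ih b hb).2.2.2.1 hp with hp' | hp'
      · exact Set.mem_union_left _ hp'
      · obtain ⟨_, ⟨⟨c, hc⟩, rfl⟩, hp'⟩ := hp'
        exact Set.mem_union_right _
          (Set.mem_iUnion.mpr ⟨⟨c, lt_of_le_of_lt hc hb⟩, hp'⟩)
  have htwo : (2 : Cardinal) < #↥U.s :=
    lt_of_lt_of_le (by exact_mod_cast Cardinal.nat_lt_aleph0 2) hκ0
  have hprevCard : #↥(P a) < #↥U.s := by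
    have hUnew : #↥(⋃ b : {x : ι // x < a}, D ↑b) < #↥U.s := by
      rcases isEmpty_or_nonempty {x : ι // x < a} with h | h
      · rw [Set.iUnion_of_empty]
        simpa using lt_of_lt_of_le Cardinal.aleph0_pos hκ0
      · have hsup : ⨆ b : {x : ι // x < a}, #↥(D ↑b) ≤ 2 :=
          ciSup_le' (fun b : {x : ι // x < a} => (ih b.1 b.2).2.2.1)
        refine lt_of_le_of_lt (Cardinal.mk_iUnion_le fun b : {x : ι // x < a} => D ↑b) ?_
        refine lt_of_le_of_lt (mul_le_mul_right hsup _) ?_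
        exact Cardinal.mul_lt_of_lt hκ0 (hsmall a) htwo
    calc #↥(P a) ≤ #↥(G ∪ ⋃ b : {x : ι // x < a}, D ↑b) := Cardinal.mk_le_mk_of_subset hprevSub
      _ ≤ #↥G + #↥(⋃ b : {x : ι // x < a}, D ↑b) := Cardinal.mk_union_le _ _
      _ < #↥U.s := Cardinal.add_lt_of_lt hκ0 hcard hUnew
  -- the step
  have hex := step_exists K U hU hprevElem hprevCard (e a).2
  have hspec := stepFun_spec (U := U) (F := P a) (c := (e a : W)) hex
  have hCa : C a = stepFun U (P a) ((e a : W)) := by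
    rw [hC, hP]; exact chainF_eq U G (fun i => ↑(e i)) a
  rw [← hCa] at hspec
  obtain ⟨h1, h2, ⟨p, q, hpq⟩, h4, h5⟩ := hspec
  refine ⟨h1, h2, ?_, ?_, h4, h5⟩
  · refine le_trans (Cardinal.mk_le_mk_of_subset (s := D a) (t := {p, q}) ?_) ?_
    · intro x hxD
      rw [hDa] at hxD
      obtain ⟨hx, hnx⟩ := hxD
      rcases hpq hx with h | h
      · exact Set.mem_insert_iff.mpr (Or.inl h)
      rcases h with h | h
      · exact Set.mem_insert_iff.mpr (Or.inr h)
      · exact absurd h hnx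
    · refine le_trans Cardinal.mk_insert_le ?_
      rw [Cardinal.mk_singleton]
      norm_num
  · intro x hx
    by_cases hmem : x ∈ P a
    · rcases hprevSub hmem with h | h
      · exact Set.mem_union_left _ h
      · obtain ⟨_, ⟨⟨c, hc⟩, rfl⟩, h⟩ := h
        exact Set.mem_union_right _ (Set.mem_iUnion.mpr ⟨⟨c, le_of_lt hc⟩, h⟩)
    · refine Set.mem_union_right _ (Set.mem_iUnion.mpr ⟨⟨a, le_refl a⟩, ?_⟩)
      rw [hDa]
      exact ⟨hx, hmem⟩

lemma prevF_def (U : Mdl L W) (G : Set (W × W)) {ι : Type u} [LinearOrder ι]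
    [WellFoundedLT ι] (e : ι → W) (a : ι) :
    prevF U G e a = G ∪ ⋃ b : {x : ι // x < a}, chainF U G e b := rfl

/-- Homogeneity: every morphism `f : U → U` with `|f| < |U|`, `U` rich,
extends to an automorphism of `U`. -/
theorem statement_7 (K : IAC L W) (U : Mdl L W) (hU : Rich K.IsMdl K.IsMor U)
    (G : Set (W × W)) (hG : K.IsMor U U G) (hcard : #↥G < #↥U.s) :
    ∃ H, G ⊆ H ∧ IsPartialEmbedding U U H ∧
      (∀ a ∈ U.s, ∃ b, (a, b) ∈ H) ∧ (∀ b ∈ U.s, ∃ a, (a, b) ∈ H) := by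
  classical
  obtain ⟨e⟩ : Nonempty ((#↥U.s).ord.ToType ≃ ↥U.s) := by
    rw [← Cardinal.eq]
    exact Cardinal.mk_ord_toType _
  have hsmall : ∀ a : (#↥U.s).ord.ToType, #{x // x < a} < #↥U.s := fun a =>
    Cardinal.mk_Iio_ord_toType a
  have inv := chain_inv K U hU G hG hcard hsmall e
  have hmono : ∀ i j : (#↥U.s).ord.ToType, i ≤ j →
      chainF U G (fun i => ↑(e i)) i ⊆ chainF U G (fun i => ↑(e i)) j := by
    intro i j hij
    rcases eq_or_lt_of_le hij with rfl | h
    · exact subset_rfl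
    · refine subset_trans ?_ (inv j).1
      rw [prevF_def]
      exact subset_trans
        (Set.subset_iUnion (fun b : {x // x < j} => chainF U G (fun i => ↑(e i)) ↑b) ⟨i, h⟩)
        Set.subset_union_right
  have hGsub : ∀ i, G ⊆ chainF U G (fun i => ↑(e i)) i := by
    intro i
    refine subset_trans ?_ (inv i).1
    rw [prevF_def]
    exact Set.subset_union_left
  have hGelem : IsElemMap U U G := small_mor_elem K U hU hG hcard
  have hHelem : IsElemMap U U (G ∪ ⋃ i, chainF U G (fun i => ↑(e i)) i) :=
    elem_union U _ hmono (fun i => (inv i).2.1) hGelem hGsub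
  refine ⟨_, Set.subset_union_left, hHelem.isPartialEmbedding, ?_, ?_⟩
  · intro a ha
    obtain ⟨d, hd⟩ := (inv (e.symm ⟨a, ha⟩)).2.2.2.2.1
    rw [Equiv.apply_symm_apply] at hd
    exact ⟨d, Set.mem_union_right _ (Set.mem_iUnion.mpr ⟨e.symm ⟨a, ha⟩, hd⟩)⟩
  · intro b hb
    obtain ⟨d, hd⟩ := (inv (e.symm ⟨b, hb⟩)).2.2.2.2.2
    rw [Equiv.apply_symm_apply] at hd
    exact ⟨d, Set.mem_union_right _ (Set.mem_iUnion.mpr ⟨e.symm ⟨b, hb⟩, hd⟩)⟩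

end Amalg
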